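/- Let μ = 3/2 + (√7/2)·i ∈ ℂ and λ = 4 ∈ ℂ, and call a pair of integers (a,b) a normalized slope if either (a,b) = (1,0), or b ≥ 1 and gcd(a,b) = 1. Then the set of normalized slopes (a,b) satisfying |a·μ + b·λ| ≤ 12 is exactly the following 26-element set: {(1,0)} ∪ {(a,1) : a ∈ {−7,−6,−5,−4,−3,−2,−1,0,1,2,3,4}} ∪ {(−7,2),(−5,2),(−3,2),(−1,2),(1,2)} ∪ {(−8,3),(−7,3),(−5,3),(−4,3),(−2,3),(−1,3)} ∪ {(−7,4),(−5,4)}. -/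

import Mathlib

/-!
The squared length of the slope `a/b` is `|a μ + 4 b|² = 4 (a² + 3ab + 4b²)`, so the short slopes
are those with `a² + 3ab + 4b² ≤ 36`. This binary form has discriminant `-7`, hence is positive
definite and confines such slopes to the box `|a| ≤ 9`, `|b| ≤ 4`, where the list is checked by
evaluation.
-/

open Complex

def slopeForm (a b : ℤ) : ℤ := a ^ 2 + 3 * a * b + 4 * b ^ 2

lemma normSq_slope (a b : ℤ) :
    normSq ((a : ℂ) * (3 / 2 + (Real.sqrt 7 / 2) * I) + (b : ℂ) * 4) = 4 * slopeForm a b := by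
  have h7 : Real.sqrt 7 ^ 2 = 7 := Real.sq_sqrt (by norm_num)
  simp only [normSq_apply, add_re, add_im, mul_re, mul_im, intCast_re, intCast_im, I_re, I_im,
    slopeForm]
  push_cast
  norm_num
  linear_combination (a : ℝ) ^ 2 / 4 * h7

lemma norm_slope_le_twelve_iff (a b : ℤ) :
    ‖(a : ℂ) * (3 / 2 + (Real.sqrt 7 / 2) * I) + (b : ℂ) * 4‖ ≤ 12 ↔ slopeForm a b ≤ 36 := by
  rw [← sq_le_sq₀ (norm_nonneg _) (by norm_num), ← normSq_eq_norm_sq, normSq_slope]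
  constructor <;> intro h
  · exact_mod_cast (by linarith : (slopeForm a b : ℝ) ≤ 36)
  · have : (slopeForm a b : ℝ) ≤ 36 := by exact_mod_cast h
    linarith

lemma sq_le_of_slopeForm_le {a b c : ℤ} (h : slopeForm a b ≤ c) :
    7 * a ^ 2 ≤ 16 * c ∧ 7 * b ^ 2 ≤ 4 * c := by
  unfold slopeForm at h
  -- `16 Q = (3a + 8b)² + 7a²` and `4 Q = (2a + 3b)² + 7b²`
  constructor <;> nlinarith [sq_nonneg (3 * a + 8 * b), sq_nonneg (2 * a + 3 * b)]

lemma mem_box_of_slopeForm_le {a b : ℤ} (h : slopeForm a b ≤ 36) :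
    a ∈ Finset.Icc (-9) 9 ∧ b ∈ Finset.Icc (-4) 4 := by
  obtain ⟨ha, hb⟩ := sq_le_of_slopeForm_le h
  simp only [Finset.mem_Icc, ← abs_le]
  constructor <;> nlinarith [abs_nonneg a, abs_nonneg b, sq_abs a, sq_abs b]

theorem chain_link_short_slopes :
    let μ : ℂ := 3 / 2 + (Real.sqrt 7 / 2) * Complex.I
    let lam : ℂ := 4
    {p : ℤ × ℤ |
        (p = (1, 0) ∨ (1 ≤ p.2 ∧ Int.gcd p.1 p.2 = 1)) ∧
        ‖(p.1 : ℂ) * μ + (p.2 : ℂ) * lam‖ ≤ 12} =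
      ({(1, 0),
        (-7, 1), (-6, 1), (-5, 1), (-4, 1), (-3, 1), (-2, 1), (-1, 1),
        (0, 1), (1, 1), (2, 1), (3, 1), (4, 1),
        (-7, 2), (-5, 2), (-3, 2), (-1, 2), (1, 2),
        (-8, 3), (-7, 3), (-5, 3), (-4, 3), (-2, 3), (-1, 3),
        (-7, 4), (-5, 4)} : Set (ℤ × ℤ)) := by
  intro μ lam
  have h_box : {p : ℤ × ℤ | (p = (1, 0) ∨ (1 ≤ p.2 ∧ Int.gcd p.1 p.2 = 1)) ∧
        ‖(p.1 : ℂ) * μ + (p.2 : ℂ) * lam‖ ≤ 12} =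
      ↑((Finset.Icc (-9) 9 ×ˢ Finset.Icc (-4) 4).filter fun p : ℤ × ℤ =>
        (p = (1, 0) ∨ (1 ≤ p.2 ∧ Int.gcd p.1 p.2 = 1)) ∧ slopeForm p.1 p.2 ≤ 36) := by
    ext ⟨a, b⟩
    simp only [Set.mem_ofPred_eq, μ, lam, norm_slope_le_twelve_iff, Finset.coe_filter,
      Finset.mem_product]
    exact ⟨fun h => ⟨mem_box_of_slopeForm_le h.2, h⟩, And.right⟩
  rw [h_box]
  simp only [← Finset.coe_singleton, ← Finset.coe_insert]
  congr 1
  decide
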